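/- For the relay MDP with 0 < β < 1, the value function satisfies the monotonicity V_β(i,0) ≤ V_β(i+1,0) for all i ≥ 0, where V_β is the optimal total expected β-discounted cost. -/
import Mathlib

open scoped ENNReal

/-- Next state of the relay: transmit (if `a`) removes one packet from each
queue (truncated subtraction), then Bernoulli arrivals `e1`, `e2` are added. -/
def nextState (s : ℕ × ℕ) (a : Bool) (e1 e2 : Bool) : ℕ × ℕ :=
  ((s.1 - (if a then 1 else 0)) + (if e1 then 1 else 0),
   (s.2 - (if a then 1 else 0)) + (if e2 then 1 else 0))

/-- Per-stage cost `C_h([y1-a]^+ + [y2-a]^+) + C_t a`. -/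
noncomputable def stageCost (Ch Ct : ℝ) (s : ℕ × ℕ) (a : Bool) : ℝ :=
  Ch * (((s.1 - (if a then 1 else 0) : ℕ) : ℝ) + ((s.2 - (if a then 1 else 0) : ℕ) : ℝ)) +
    Ct * (if a then 1 else 0)

/-- Finite-horizon expected discounted cost of a history-dependent policy `u`
(the policy sees the past states `h` and the current state `s`). -/
noncomputable def J (p1 p2 β Ch Ct : ℝ) (u : List (ℕ × ℕ) → ℕ × ℕ → Bool) :
    ℕ → List (ℕ × ℕ) → ℕ × ℕ → ℝ≥0∞
  | 0, _, _ => 0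
  | N + 1, h, s =>
      ENNReal.ofReal (stageCost Ch Ct s (u h s)) +
        ENNReal.ofReal β *
          (ENNReal.ofReal ((1 - p1) * (1 - p2)) *
              J p1 p2 β Ch Ct u N (s :: h) (nextState s (u h s) false false) +
           ENNReal.ofReal (p1 * (1 - p2)) *
              J p1 p2 β Ch Ct u N (s :: h) (nextState s (u h s) true false) +
           ENNReal.ofReal ((1 - p1) * p2) *
              J p1 p2 β Ch Ct u N (s :: h) (nextState s (u h s) false true) +
           ENNReal.ofReal (p1 * p2) *
              J p1 p2 β Ch Ct u N (s :: h) (nextState s (u h s) true true))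

/-- Policies respecting the forced actions: wait at `(0,0)`, transmit (code)
whenever both queues are nonempty. -/
def ValidPolicy : Type :=
  {u : List (ℕ × ℕ) → ℕ × ℕ → Bool //
    ∀ h s, (s = ((0 : ℕ), (0 : ℕ)) → u h s = false) ∧ (1 ≤ s.1 → 1 ≤ s.2 → u h s = true)}


/-- Optimal total expected `β`-discounted cost of the relay MDP. -/
noncomputable def Vdisc (p1 p2 β Ch Ct : ℝ) (s : ℕ × ℕ) : ℝ≥0∞ :=
  ⨅ u : ValidPolicy, ⨆ N : ℕ, J p1 p2 β Ch Ct u.1 N [] s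

/-- Coupling lift: from a lower-trajectory history `h` and current lower state `s`,
reconstruct the coupled upper state (first component) and the upper history (second). -/
def lift (u : List (ℕ × ℕ) → ℕ × ℕ → Bool) :
    List (ℕ × ℕ) → ((ℕ × ℕ → ℕ × ℕ) × List (ℕ × ℕ))
  | [] => (fun s => (s.1 + 1, s.2), [])
  | t :: h =>
      let L := lift u h
      let sp := L.1 t
      let a : Bool := u L.2 sp
      let a' : Bool := if t = ((0 : ℕ), (0 : ℕ)) then false else a
      (fun s =>
        ((sp.1 - (if a then 1 else 0)) + (s.1 - (t.1 - (if a' then 1 else 0))),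
         (sp.2 - (if a then 1 else 0)) + (s.2 - (t.2 - (if a' then 1 else 0)))),
       sp :: L.2)

/-- Mirrored (lower) policy. -/
def lowPol (u : List (ℕ × ℕ) → ℕ × ℕ → Bool) (h : List (ℕ × ℕ)) (s : ℕ × ℕ) : Bool :=
  if 1 ≤ s.1 ∧ 1 ≤ s.2 then true
  else if s = ((0 : ℕ), (0 : ℕ)) then false
  else u (lift u h).2 ((lift u h).1 s)

lemma lowPol_valid (u : List (ℕ × ℕ) → ℕ × ℕ → Bool) :
    ∀ h s, (s = ((0 : ℕ), (0 : ℕ)) → lowPol u h s = false) ∧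
      (1 ≤ s.1 → 1 ≤ s.2 → lowPol u h s = true) := by
  intro h s
  constructor
  · rintro rfl; simp [lowPol]
  · intro h1 h2; simp [lowPol, h1, h2]

/-- On dominated states, the mirrored action agrees with "upper action unless lower is (0,0)". -/
lemma lowPol_eq (u : List (ℕ × ℕ) → ℕ × ℕ → Bool)
    (hu : ∀ h s, (s = ((0 : ℕ), (0 : ℕ)) → u h s = false) ∧ (1 ≤ s.1 → 1 ≤ s.2 → u h s = true))
    (h : List (ℕ × ℕ)) (s : ℕ × ℕ)
    (h1 : s.1 ≤ ((lift u h).1 s).1) (h2 : s.2 ≤ ((lift u h).1 s).2) :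
    lowPol u h s = if s = ((0 : ℕ), (0 : ℕ)) then false
      else u (lift u h).2 ((lift u h).1 s) := by
  by_cases hb : 1 ≤ s.1 ∧ 1 ≤ s.2
  · have hz : s ≠ ((0 : ℕ), (0 : ℕ)) := by
      rintro rfl; exact absurd hb.1 (by norm_num)
    have := (hu (lift u h).2 ((lift u h).1 s)).2 (le_trans hb.1 h1) (le_trans hb.2 h2)
    simp only [lowPol, if_pos hb, if_neg hz, this]
  · simp [lowPol, hb]

section

variable (p1 p2 β Ch Ct : ℝ)

lemma key (hCt : 0 ≤ Ct) (hCh : 0 ≤ Ch)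
    (u : List (ℕ × ℕ) → ℕ × ℕ → Bool)
    (hu : ∀ h s, (s = ((0 : ℕ), (0 : ℕ)) → u h s = false) ∧ (1 ≤ s.1 → 1 ≤ s.2 → u h s = true)) :
    ∀ N h s, s.1 ≤ ((lift u h).1 s).1 → s.2 ≤ ((lift u h).1 s).2 →
      J p1 p2 β Ch Ct (lowPol u) N h s ≤
        J p1 p2 β Ch Ct u N (lift u h).2 ((lift u h).1 s) := by
  intro N
  induction N with
  | zero => intro h s _ _; simp [J]
  | succ N ih =>
    intro h s h1 h2
    set s' := (lift u h).1 s with hs'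
    set a : Bool := u (lift u h).2 s' with ha
    have hact : lowPol u h s = if s = ((0 : ℕ), (0 : ℕ)) then false else a :=
      lowPol_eq u hu h s h1 h2
    set a' : Bool := if s = ((0 : ℕ), (0 : ℕ)) then false else a with ha'
    -- key pointwise facts
    have hsub1 : s.1 - (if a' then 1 else 0) ≤ s'.1 - (if a then 1 else 0) := by
      by_cases hz : s = ((0 : ℕ), (0 : ℕ))
      · subst hz; simp [ha']
      · simp only [ha', if_neg hz]
        exact Nat.sub_le_sub_right h1 _
    have hsub2 : s.2 - (if a' then 1 else 0) ≤ s'.2 - (if a then 1 else 0) := by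
      by_cases hz : s = ((0 : ℕ), (0 : ℕ))
      · subst hz; simp [ha']
      · simp only [ha', if_neg hz]
        exact Nat.sub_le_sub_right h2 _
    -- stage cost comparison
    have hcost : stageCost Ch Ct s a' ≤ stageCost Ch Ct s' a := by
      by_cases hz : s = ((0 : ℕ), (0 : ℕ))
      · have : a' = false := by simp [ha', hz]
        rw [this]
        subst hz
        simp only [stageCost]
        have : Ch * ((((0:ℕ) - (if (false:Bool) then 1 else 0) : ℕ) : ℝ) +
            (((0:ℕ) - (if (false:Bool) then 1 else 0) : ℕ) : ℝ)) + Ct * (if (false:Bool) then 1 else 0) = 0 := by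
          norm_num
        rw [this]
        positivity
      · have haa : a' = a := if_neg hz
        rw [haa] at hsub1 hsub2
        rw [haa]
        simp only [stageCost]
        refine add_le_add (mul_le_mul_of_nonneg_left ?_ hCh) le_rfl
        exact add_le_add (Nat.cast_le.2 hsub1) (Nat.cast_le.2 hsub2)
    -- lift on the extended history
    have hlift2 : (lift u (s :: h)).2 = s' :: (lift u h).2 := rfl
    have hliftnext : ∀ e1 e2 : Bool,
        (lift u (s :: h)).1 (nextState s a' e1 e2) = nextState s' a e1 e2 := by
      intro e1 e2
      show ((s'.1 - (if a then 1 else 0)) +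
              ((s.1 - (if a' then 1 else 0) + (if e1 then 1 else 0)) - (s.1 - (if a' then 1 else 0))),
            (s'.2 - (if a then 1 else 0)) +
              ((s.2 - (if a' then 1 else 0) + (if e2 then 1 else 0)) - (s.2 - (if a' then 1 else 0)))) = _
      simp [nextState, Nat.add_sub_cancel_left]
    have hdomnext : ∀ e1 e2 : Bool,
        (nextState s a' e1 e2).1 ≤ ((lift u (s :: h)).1 (nextState s a' e1 e2)).1 ∧
        (nextState s a' e1 e2).2 ≤ ((lift u (s :: h)).1 (nextState s a' e1 e2)).2 := by
      intro e1 e2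
      rw [hliftnext]
      exact ⟨Nat.add_le_add_right hsub1 _, Nat.add_le_add_right hsub2 _⟩
    -- now unfold J and combine
    rw [J, J, hact]
    refine add_le_add (ENNReal.ofReal_le_ofReal hcost) (mul_le_mul_right ?_ _)
    have step : ∀ e1 e2 : Bool,
        J p1 p2 β Ch Ct (lowPol u) N (s :: h) (nextState s a' e1 e2) ≤
          J p1 p2 β Ch Ct u N (s' :: (lift u h).2) (nextState s' a e1 e2) := by
      intro e1 e2
      have := ih (s :: h) (nextState s a' e1 e2) (hdomnext e1 e2).1 (hdomnext e1 e2).2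
      rwa [hlift2, hliftnext] at this
    exact add_le_add (add_le_add (add_le_add
      (mul_le_mul_right (step false false) _) (mul_le_mul_right (step true false) _))
      (mul_le_mul_right (step false true) _)) (mul_le_mul_right (step true true) _)

end

/-- The discounted value function is monotone in the first queue length. -/
theorem discounted_value_monotone
    (p1 p2 β Ch Ct : ℝ) (hβ0 : 0 < β) (hβ1 : β < 1)
    (hCt : 0 ≤ Ct) (hCh : 0 ≤ Ch)
    (hp10 : 0 ≤ p1) (hp11 : p1 ≤ 1) (hp20 : 0 ≤ p2) (hp21 : p2 ≤ 1) :
    ∀ i : ℕ, Vdisc p1 p2 β Ch Ct (i, 0) ≤ Vdisc p1 p2 β Ch Ct (i + 1, 0) := by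
  intro i
  rw [Vdisc, Vdisc]
  refine le_iInf fun u => ?_
  refine iInf_le_of_le ⟨lowPol u.1, lowPol_valid u.1⟩ ?_
  refine iSup_le fun N => le_iSup_of_le N ?_
  have := key p1 p2 β Ch Ct hCt hCh u.1 u.2 N [] (i, 0) (by simp [lift]) (by simp [lift])
  simpa [lift] using this
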